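/- arXiv:quant-ph/0006071 — 2 statements merged into one kernel-verified Lean document; each statement's English description precedes it below -/
import Mathlib

section
/- A state ρ on H₁ ⊗ ... ⊗ Hₙ (finite-dimensional) is n-partite separable if and only if Tr(A ρ) ≥ 0 for every Hermitian operator A satisfying Tr(A (P₁ ⊗ ... ⊗ Pₙ)) ≥ 0 for all rank-one projections Pᵢ on Hᵢ. -/
open Matrix
open scoped ComplexOrder

noncomputable section

/-- A state: positive semidefinite with trace one. -/
def IsState {n : Type*} [Fintype n] (ρ : Matrix n n ℂ) : Prop :=
  ρ.PosSemidef ∧ ρ.trace = 1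

/-- Tensor product of a family of matrices `M i` on `H i`, as a matrix on
`H₁ ⊗ ... ⊗ Hₙ`. -/
def famTensor {n : ℕ} {d : Fin n → ℕ} (M : ∀ i, Matrix (Fin (d i)) (Fin (d i)) ℂ) :
    Matrix (∀ i, Fin (d i)) (∀ i, Fin (d i)) ℂ :=
  Matrix.of fun f g => ∏ i, M i (f i) (g i)

/-- An n-partite separable state: a convex combination of n-fold product states. -/
def SepN {n : ℕ} {d : Fin n → ℕ} (ρ : Matrix (∀ i, Fin (d i)) (∀ i, Fin (d i)) ℂ) : Prop :=
  ∃ (k : ℕ) (p : Fin k → ℝ) (σ : Fin k → ∀ i, Matrix (Fin (d i)) (Fin (d i)) ℂ),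
    (∀ j, 0 ≤ p j) ∧ (∑ j, p j = 1) ∧ (∀ j i, IsState (σ j i)) ∧
    ρ = ∑ j, (p j : ℂ) • famTensor (σ j)

/-- A rank-one (orthogonal) projection `|v⟩⟨v|`, `v` a unit vector. -/
def IsRankOneProj {m : Type*} [Fintype m] (P : Matrix m m ℂ) : Prop :=
  ∃ v : m → ℂ, star v ⬝ᵥ v = 1 ∧ P = Matrix.vecMulVec v (star v)

/-!
Every product of states is, by the spectral theorem in each factor, a nonnegative combination of
product projections `P₁ ⊗ ⋯ ⊗ Pₙ`, so separable states lie in the convex hull `K` of the product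
projections and every witness is nonnegative on them. Conversely `K` is compact: the product
projections are a continuous image of a product of unit spheres, and by Carathéodory the convex
hull of a compact set in finite dimension is compact. A state `ρ ∉ K` is therefore strictly
separated from `K` by a real-linear functional, which on Hermitian matrices is `X ↦ Re Tr(A X)`
for a Hermitian `A`; since all states have trace one, shifting `A` by the separating constant
times the identity gives a witness with `Re Tr(A ρ) < 0`.
-/

theorem isCompact_convexHull {E : Type*} [AddCommGroup E] [Module ℝ E] [TopologicalSpace E]
    [ContinuousAdd E] [ContinuousSMul ℝ E] [FiniteDimensional ℝ E] {s : Set E}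
    (hs : IsCompact s) : IsCompact (convexHull ℝ s) := by
  let m := Module.finrank ℝ E + 1
  let Φ : (Fin m → ℝ) × (Fin m → E) → E := fun p => ∑ j, p.1 j • p.2 j
  have hΦ : Continuous Φ := by fun_prop
  suffices convexHull ℝ s = Φ '' (stdSimplex ℝ (Fin m) ×ˢ Set.univ.pi fun _ => s) by
    rw [this]
    exact ((isCompact_stdSimplex ℝ _).prod (isCompact_univ_pi fun _ => hs)).image hΦ
  refine Set.Subset.antisymm (fun x hx => ?_) ?_
  · -- Carathéodory gives at most `m` points; pad the combination with zero weights.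
    obtain ⟨ι, _, z, w, hzs, hz, hw0, hw1, rfl⟩ := eq_pos_convex_span_of_mem_convexHull hx
    obtain ⟨i₀⟩ : Nonempty ι := by
      by_contra h
      simp [not_nonempty_iff.mp h] at hw1
    have hcard : Fintype.card ι ≤ m :=
      hz.card_le_finrank_succ.trans (Nat.succ_le_succ (Submodule.finrank_le _))
    let e : ι ↪ Fin m := (Fintype.equivFin ι).toEmbedding.trans (Fin.castLEEmb hcard)
    have he (j : Fin m) (hj : j ∉ Set.range e) : Function.extend e w 0 j = 0 :=
      Function.extend_apply' _ _ _ hj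
    refine ⟨(Function.extend e w 0, Function.extend e z fun _ => z i₀),
      ⟨⟨fun j => ?_, ?_⟩, fun j _ => ?_⟩, ?_⟩
    · show 0 ≤ Function.extend e w 0 j
      rw [Function.extend_def]
      split_ifs
      exacts [(hw0 _).le, le_rfl]
    · rw [← hw1]
      exact (Fintype.sum_of_injective e e.injective _ _ he
        fun i => (e.injective.extend_apply _ _ i).symm).symm
    · show Function.extend e z (fun _ => z i₀) j ∈ s
      rw [Function.extend_def]
      split_ifs
      exacts [hzs ⟨_, rfl⟩, hzs ⟨i₀, rfl⟩]
    · refine (Fintype.sum_of_injective e e.injective _ _ (fun j hj => ?_) fun i => ?_).symm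
      · simp [he j hj]
      · simp [e.injective.extend_apply]
  · rintro _ ⟨⟨w, z⟩, ⟨hw, hz⟩, rfl⟩
    exact (convex_convexHull ℝ s).sum_mem (fun j _ => hw.1 j) hw.2
      fun j _ => subset_convexHull ℝ s (hz j trivial)

instance Matrix.locallyConvexSpace {k l : Type*} : LocallyConvexSpace ℝ (Matrix k l ℂ) :=
  inferInstanceAs (LocallyConvexSpace ℝ (k → l → ℂ))

lemma Matrix.exists_trace_mul_eq {R : Type*} [CommSemiring R] {k l : Type*} [Fintype k]
    [Fintype l] [DecidableEq k] [DecidableEq l] (g : Matrix k l R →ₗ[R] R) :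
    ∃ B : Matrix l k R, ∀ M, (B * M).trace = g M := by
  refine ⟨of fun b a => g (single a b 1), fun M => ?_⟩
  conv_rhs => rw [matrix_eq_sum_single M]
  have hsingle (a : k) (b : l) : g (single a b (M a b)) = M a b * g (single a b 1) := by
    rw [← smul_eq_mul, ← map_smul, smul_single, smul_eq_mul, mul_one]
  simp only [map_sum, hsingle, trace, diag, mul_apply, of_apply]
  rw [Finset.sum_comm]
  exact Finset.sum_congr rfl fun a _ => Finset.sum_congr rfl fun b _ => mul_comm _ _

lemma re_trace_mul_sum_smul {ι κ : Type*} [Fintype ι] [Fintype κ] (A : Matrix ι ι ℂ)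
    (p : κ → ℝ) (M : κ → Matrix ι ι ℂ) :
    (A * ∑ j, (p j : ℂ) • M j).trace.re = ∑ j, p j * (A * M j).trace.re := by
  simp [Matrix.mul_sum, trace_sum, Complex.re_sum]

lemma re_trace_sub_smul_one_mul {ι : Type*} [Fintype ι] [DecidableEq ι] (A X : Matrix ι ι ℂ)
    (u : ℝ) (hX : X.trace = 1) : ((A - u • 1) * X).trace.re = (A * X).trace.re - u := by
  simp [Matrix.sub_mul, hX]

section

variable {m : Type*} [Fintype m]

lemma IsRankOneProj.isState {P : Matrix m m ℂ} (hP : IsRankOneProj P) : IsState P := by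
  obtain ⟨v, hv, rfl⟩ := hP
  exact ⟨posSemidef_vecMulVec_self_star v, by rw [trace_vecMulVec, dotProduct_comm, hv]⟩

lemma Matrix.PosSemidef.exists_eq_sum_smul_isRankOneProj [DecidableEq m] {σ : Matrix m m ℂ}
    (hσ : σ.PosSemidef) :
    ∃ (c : m → ℝ) (P : m → Matrix m m ℂ),
      (∀ x, 0 ≤ c x) ∧ (∀ x, IsRankOneProj (P x)) ∧ σ = ∑ x, (c x : ℂ) • P x := by
  have hH := hσ.isHermitian
  let U : Matrix m m ℂ := hH.eigenvectorUnitary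
  refine ⟨hH.eigenvalues, fun x => vecMulVec (Uᵀ x) (star (Uᵀ x)), hσ.eigenvalues_nonneg,
    fun x => ⟨Uᵀ x, ?_, rfl⟩, ?_⟩
  · have hU : star U * U = 1 := mem_unitaryGroup_iff'.mp hH.eigenvectorUnitary.2
    simpa [mul_apply, dotProduct, one_apply] using congr_fun (congr_fun hU x) x
  · conv_lhs => rw [hH.spectral_theorem]
    ext a b
    simp only [Unitary.conjStarAlgAut_apply, mul_apply, diagonal_apply, Function.comp_apply,
      mul_ite, mul_zero, Finset.sum_ite_eq', Finset.mem_univ, ↓reduceIte, star_apply,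
      RCLike.star_def, Complex.coe_algebraMap, Matrix.sum_apply, Matrix.smul_apply,
      vecMulVec_apply, Pi.star_apply, transpose_apply, smul_eq_mul, U]
    exact Finset.sum_congr rfl fun _ _ => by ring

lemma EuclideanSpace.star_dotProduct_self_eq_one_iff (v : EuclideanSpace ℂ m) :
    star v.ofLp ⬝ᵥ v.ofLp = 1 ↔ ‖v‖ = 1 := by
  rw [dotProduct_comm, ← EuclideanSpace.inner_eq_star_dotProduct, inner_self_eq_norm_sq_to_K,
    ← RCLike.ofReal_pow, ← RCLike.ofReal_one, RCLike.ofReal_inj,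
    pow_eq_one_iff_of_nonneg (norm_nonneg v) two_ne_zero]

lemma isCompact_setOf_isRankOneProj : IsCompact {P : Matrix m m ℂ | IsRankOneProj P} := by
  have : {P : Matrix m m ℂ | IsRankOneProj P} =
      (fun v : EuclideanSpace ℂ m => vecMulVec v.ofLp (star v.ofLp)) '' Metric.sphere 0 1 := by
    ext P
    constructor
    · rintro ⟨v, hv, rfl⟩
      exact ⟨WithLp.toLp 2 v, by simpa [← EuclideanSpace.star_dotProduct_self_eq_one_iff], rfl⟩
    · rintro ⟨v, hv, rfl⟩
      exact ⟨v.ofLp, (EuclideanSpace.star_dotProduct_self_eq_one_iff v).mpr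
        (mem_sphere_zero_iff_norm.mp hv), rfl⟩
  rw [this]
  exact (isCompact_sphere 0 1).image (by fun_prop)

lemma Matrix.exists_isHermitian_re_trace_mul_eq [DecidableEq m] (f : Matrix m m ℂ →ₗ[ℝ] ℝ) :
    ∃ A : Matrix m m ℂ, A.IsHermitian ∧ ∀ M, M.IsHermitian → (A * M).trace.re = f M := by
  obtain ⟨B, hB⟩ := exists_trace_mul_eq (Module.Dual.extendRCLike (𝕜 := ℂ) f)
  refine ⟨(2⁻¹ : ℝ) • (B + Bᴴ), (isHermitian_add_transpose_self B).smul (.all _), fun M hM => ?_⟩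
  have hre : (B * M).trace.re = f M := by
    rw [hB, ← RCLike.re_to_complex, Module.Dual.re_extendRCLike_apply]
  have hstar : (Bᴴ * M).trace = star (B * M).trace := by
    rw [← trace_conjTranspose, conjTranspose_mul, hM.eq, trace_mul_comm]
  rw [Matrix.smul_mul, trace_smul, Matrix.add_mul, trace_add, hstar, Complex.smul_re,
    Complex.add_re, Complex.star_def, Complex.conj_re, hre, smul_eq_mul]
  ring

end

section

variable {n : ℕ} {d : Fin n → ℕ}

lemma trace_famTensor (M : ∀ i, Matrix (Fin (d i)) (Fin (d i)) ℂ) :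
    (famTensor M).trace = ∏ i, (M i).trace := by
  simp only [trace, diag, famTensor, of_apply, Finset.prod_univ_sum, Fintype.piFinset_univ]

lemma isHermitian_famTensor {M : ∀ i, Matrix (Fin (d i)) (Fin (d i)) ℂ}
    (hM : ∀ i, (M i).IsHermitian) : (famTensor M).IsHermitian := by
  ext f g
  simp only [famTensor, conjTranspose_apply, of_apply, star_prod]
  exact Finset.prod_congr rfl fun i _ => (hM i).apply (f i) (g i)

lemma famTensor_sum_smul {κ : Fin n → Type*} [∀ i, Fintype (κ i)] (c : ∀ i, κ i → ℂ)
    (M : ∀ i, κ i → Matrix (Fin (d i)) (Fin (d i)) ℂ) :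
    famTensor (fun i => ∑ x, c i x • M i x)
      = ∑ x : ∀ i, κ i, (∏ i, c i (x i)) • famTensor (fun i => M i (x i)) := by
  ext f g
  simp only [famTensor, of_apply, Matrix.sum_apply, Matrix.smul_apply, smul_eq_mul,
    Finset.prod_univ_sum, Fintype.piFinset_univ, Finset.prod_mul_distrib]

lemma continuous_famTensor : Continuous (famTensor (d := d)) :=
  continuous_matrix fun f g =>
    continuous_finsetProd Finset.univ fun i _ => (continuous_apply i).matrix_elem (f i) (g i)

lemma re_trace_mul_famTensor_nonneg (A : Matrix (∀ i, Fin (d i)) (∀ i, Fin (d i)) ℂ)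
    (hA : ∀ P : ∀ i, Matrix (Fin (d i)) (Fin (d i)) ℂ,
      (∀ i, IsRankOneProj (P i)) → 0 ≤ (A * famTensor P).trace.re)
    {σ : ∀ i, Matrix (Fin (d i)) (Fin (d i)) ℂ} (hσ : ∀ i, (σ i).PosSemidef) :
    0 ≤ (A * famTensor σ).trace.re := by
  choose c P hc hP hσP using fun i => (hσ i).exists_eq_sum_smul_isRankOneProj
  simp only [funext hσP, famTensor_sum_smul, ← Complex.ofReal_prod, re_trace_mul_sum_smul]
  exact Finset.sum_nonneg fun x _ =>
    mul_nonneg (Finset.prod_nonneg fun i _ => hc i (x i)) (hA _ fun i => hP i (x i))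

lemma SepN.re_trace_mul_nonneg {ρ : Matrix (∀ i, Fin (d i)) (∀ i, Fin (d i)) ℂ} (hρ : SepN ρ)
    (A : Matrix (∀ i, Fin (d i)) (∀ i, Fin (d i)) ℂ)
    (hA : ∀ P : ∀ i, Matrix (Fin (d i)) (Fin (d i)) ℂ,
      (∀ i, IsRankOneProj (P i)) → 0 ≤ (A * famTensor P).trace.re) :
    0 ≤ (A * ρ).trace.re := by
  obtain ⟨k, p, σ, hp, -, hσ, rfl⟩ := hρ
  rw [re_trace_mul_sum_smul]
  exact Finset.sum_nonneg fun j _ =>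
    mul_nonneg (hp j) (re_trace_mul_famTensor_nonneg A hA fun i => (hσ j i).1)

variable (n d) in
def productProjections : Set (Matrix (∀ i, Fin (d i)) (∀ i, Fin (d i)) ℂ) :=
  famTensor '' Set.univ.pi fun _ => {P | IsRankOneProj P}

lemma SepN.of_mem_convexHull {ρ : Matrix (∀ i, Fin (d i)) (∀ i, Fin (d i)) ℂ}
    (hρ : ρ ∈ convexHull ℝ (productProjections n d)) : SepN ρ := by
  obtain ⟨ι, _, w, z, hw0, hw1, hz, rfl⟩ := mem_convexHull_iff_exists_fintype.mp hρ
  choose P hP hPz using hz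
  let e := (Fintype.equivFin ι).symm
  refine ⟨Fintype.card ι, w ∘ e, P ∘ e, fun j => hw0 (e j), by rw [← hw1]; exact e.sum_comp w,
    fun j i => (hP (e j) i trivial).isState, ?_⟩
  rw [← e.sum_comp]
  refine Finset.sum_congr rfl fun j _ => ?_
  rw [← hPz]
  exact RCLike.real_smul_eq_coe_smul (K := ℂ) _ _

variable (n d) in
lemma isCompact_productProjections : IsCompact (productProjections n d) :=
  (isCompact_univ_pi fun _ => isCompact_setOf_isRankOneProj).image continuous_famTensor

end

/-- Theorem 1: a state `ρ` is n-partite separable iff `Tr(Aρ) ≥ 0` for every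
Hermitian `A` with nonnegative expectation on all product projections. -/
theorem stmt11 {n : ℕ} {d : Fin n → ℕ}
    (ρ : Matrix (∀ i, Fin (d i)) (∀ i, Fin (d i)) ℂ) (hρ : IsState ρ) :
    SepN ρ ↔
      ∀ A : Matrix (∀ i, Fin (d i)) (∀ i, Fin (d i)) ℂ, A.IsHermitian →
        (∀ P : ∀ i, Matrix (Fin (d i)) (Fin (d i)) ℂ,
          (∀ i, IsRankOneProj (P i)) → 0 ≤ ((A * famTensor P).trace).re) →
        0 ≤ ((A * ρ).trace).re := by
  refine ⟨fun hsep A _ hA => hsep.re_trace_mul_nonneg A hA, fun hwit => ?_⟩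
  by_contra hsep
  obtain ⟨f, u, hfρ, hfK⟩ := geometric_hahn_banach_point_closed (convex_convexHull ℝ _)
    (isCompact_convexHull (isCompact_productProjections n d)).isClosed
    fun h => hsep (SepN.of_mem_convexHull h)
  obtain ⟨A, hA, hAf⟩ := exists_isHermitian_re_trace_mul_eq f.toLinearMap
  simp only [ContinuousLinearMap.coe_coe] at hAf
  have hwitA := hwit (A - u • 1) (hA.sub (isHermitian_one.smul (.all u))) fun P hP => by
    have hPK : famTensor P ∈ productProjections n d := ⟨P, fun i _ => hP i, rfl⟩
    rw [re_trace_sub_smul_one_mul _ _ _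
        (by rw [trace_famTensor]; exact Finset.prod_eq_one fun i _ => (hP i).isState.2),
      hAf _ (isHermitian_famTensor fun i => (hP i).isState.1.1)]
    linarith [hfK _ (subset_convexHull ℝ _ hPK)]
  rw [re_trace_sub_smul_one_mul _ _ _ hρ.2, hAf _ hρ.1.1] at hwitA
  linarith
end
end

section
/- Let S be a finite set of product vectors in H₁ ⊗ ... ⊗ Hₙ forming an unextendible product basis (UPB), let P be the orthogonal projection onto span(S), and let P⊥ = I − P. Then the state ρ_UPB = P⊥ / Tr(P⊥) is entangled, i.e., not n-partite separable. -/
/-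
A separable state is a convex combination of product states `⊗ᵢ σᵢ`, and each such term has the
nonzero product vector `⊗ᵢ σᵢ uᵢ` in its range. Every product vector `⊗ᵢ aᵢ` in the kernel of the
combination is killed by each term of positive weight, so some factor `σᵢ` kills `aᵢ`, which makes
`⊗ᵢ aᵢ` orthogonal to `⊗ᵢ σᵢ uᵢ`. The UPB lies in the kernel of `ρ_UPB`, so this product vector
would extend it.
-/

open Matrix
open scoped ComplexOrder

noncomputable section

/-- Tensor product `φ¹ ⊗ ... ⊗ φⁿ` of a family of vectors. -/
def productVec {n : ℕ} {d : Fin n → ℕ} (φ : ∀ i, Fin (d i) → ℂ) :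
    (∀ i, Fin (d i)) → ℂ :=
  fun f => ∏ i, φ i (f i)

/-- The rank-one operator `|v⟩⟨v|`. -/
def outer {m : Type*} (v : m → ℂ) : Matrix m m ℂ := Matrix.vecMulVec v (star v)

section ProductVectors

variable {n : ℕ} {d : Fin n → ℕ}

lemma star_productVec_dotProduct_productVec (a b : ∀ i, Fin (d i) → ℂ) :
    star (productVec a) ⬝ᵥ productVec b = ∏ i, star (a i) ⬝ᵥ b i := by
  simp only [dotProduct, Pi.star_apply, productVec, star_prod, ← Finset.prod_mul_distrib]
  rw [Fintype.prod_sum]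

lemma famTensor_mulVec_productVec (M : ∀ i, Matrix (Fin (d i)) (Fin (d i)) ℂ)
    (a : ∀ i, Fin (d i) → ℂ) :
    famTensor M *ᵥ productVec a = productVec fun i => M i *ᵥ a i := by
  ext f
  simp only [mulVec, dotProduct, famTensor, productVec, Matrix.of_apply,
    ← Finset.prod_mul_distrib]
  rw [Fintype.prod_sum]

lemma productVec_eq_zero_iff {φ : ∀ i, Fin (d i) → ℂ} :
    productVec φ = 0 ↔ ∃ i, φ i = 0 := by
  constructor
  · intro h
    by_contra! hφ
    choose f hf using fun i => Function.ne_iff.mp (hφ i)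
    obtain ⟨i, -, hi⟩ := Finset.prod_eq_zero_iff.mp (congrFun h f)
    exact hf i hi
  · rintro ⟨i, hi⟩
    ext f
    exact Finset.prod_eq_zero (Finset.mem_univ i) (by simp [hi])

end ProductVectors

lemma IsState.exists_mulVec_ne_zero {ι : Type*} [Fintype ι] {σ : Matrix ι ι ℂ}
    (hσ : IsState σ) : ∃ u, σ *ᵥ u ≠ 0 := by
  by_contra! h
  have : σ = 0 := ext_iff_mulVec.mpr fun u => by rw [h u, zero_mulVec]
  simpa [this] using hσ.2

lemma Matrix.PosSemidef.star_dotProduct_mulVec_eq_zero {ι : Type*} [Fintype ι]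
    {A : Matrix ι ι ℂ} (hA : A.PosSemidef) {x : ι → ℂ} (hx : star x ⬝ᵥ A *ᵥ x = 0)
    (y : ι → ℂ) : star x ⬝ᵥ A *ᵥ y = 0 := by
  rw [dotProduct_mulVec, ← hA.1.eq, ← star_mulVec, (hA.dotProduct_mulVec_zero_iff x).mp hx,
    star_zero, zero_dotProduct]

lemma SepN.exists_productVec_orthogonal_of_mulVec_eq_zero {n : ℕ} {d : Fin n → ℕ}
    {ρ : Matrix (∀ i, Fin (d i)) (∀ i, Fin (d i)) ℂ} (hρ : SepN ρ) :
    ∃ φ : ∀ i, Fin (d i) → ℂ, productVec φ ≠ 0 ∧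
      ∀ a, ρ *ᵥ productVec a = 0 → star (productVec a) ⬝ᵥ productVec φ = 0 := by
  obtain ⟨k, p, σ, hp0, hp1, hσ, rfl⟩ := hρ
  obtain ⟨j, -, hj⟩ : ∃ j ∈ Finset.univ, (0 : Fin k → ℝ) j < p j :=
    Finset.exists_lt_of_sum_lt (by simp [hp1])
  choose u hu using fun i => (hσ j i).exists_mulVec_ne_zero
  refine ⟨fun i => σ j i *ᵥ u i, mt productVec_eq_zero_iff.mp (not_exists.mpr hu), fun a ha => ?_⟩
  have hquad : ∑ j', (p j' : ℂ) * ∏ i, star (a i) ⬝ᵥ σ j' i *ᵥ a i = 0 := by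
    have := congrArg (star (productVec a) ⬝ᵥ ·) ha
    simpa only [sum_mulVec, dotProduct_sum, smul_mulVec, dotProduct_smul, smul_eq_mul,
      famTensor_mulVec_productVec, star_productVec_dotProduct_productVec, dotProduct_zero]
      using this
  have hterm_nonneg : ∀ j', 0 ≤ (p j' : ℂ) * ∏ i, star (a i) ⬝ᵥ σ j' i *ᵥ a i := fun j' =>
    mul_nonneg (Complex.zero_le_real.mpr (hp0 j'))
      (Finset.prod_nonneg fun i _ => (hσ j' i).1.dotProduct_mulVec_nonneg (a i))
  have hterm := (Finset.sum_eq_zero_iff_of_nonneg fun j' _ => hterm_nonneg j').mp hquad j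
    (Finset.mem_univ j)
  obtain ⟨i, -, hi⟩ := Finset.prod_eq_zero_iff.mp
    ((mul_eq_zero.mp hterm).resolve_left (by exact_mod_cast hj.ne'))
  rw [star_productVec_dotProduct_productVec]
  exact Finset.prod_eq_zero (Finset.mem_univ i) ((hσ j i).1.star_dotProduct_mulVec_eq_zero hi _)

lemma sum_outer_mulVec_of_orthonormal {ι : Type*} [Fintype ι] {m : ℕ} {w : Fin m → ι → ℂ}
    (hw : ∀ j k, star (w j) ⬝ᵥ w k = if j = k then 1 else 0) (k : Fin m) :
    (∑ j, outer (w j)) *ᵥ w k = w k := by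
  simp [sum_mulVec, outer, vecMulVec_mulVec, hw]

theorem stmt16_general {n m : ℕ} {d : Fin n → ℕ}
    (v : Fin m → ∀ i, Fin (d i) → ℂ)
    (horth : ∀ j k, star (productVec (v j)) ⬝ᵥ productVec (v k)
      = if j = k then 1 else 0)
    (hunext : ∀ φ : ∀ i, Fin (d i) → ℂ, productVec φ ≠ 0 →
      ∃ j, star (productVec (v j)) ⬝ᵥ productVec φ ≠ 0)
    (P Pperp ρ : Matrix (∀ i, Fin (d i)) (∀ i, Fin (d i)) ℂ)
    (hP : P = ∑ j, outer (productVec (v j)))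
    (hPperp : Pperp = 1 - P)
    (hρ : ρ = (Pperp.trace)⁻¹ • Pperp) :
    ¬ SepN ρ := by
  intro hsep
  obtain ⟨φ, hφ, horthφ⟩ := hsep.exists_productVec_orthogonal_of_mulVec_eq_zero
  obtain ⟨j, hj⟩ := hunext φ hφ
  refine hj (horthφ (v j) ?_)
  rw [hρ, hPperp, hP, smul_mulVec, sub_mulVec, one_mulVec,
    sum_outer_mulVec_of_orthonormal horth, sub_self, smul_zero]

/-- the normalized projector onto the orthogonal complement of the
span of an unextendible product basis is an entangled (non-separable) state. -/
theorem stmt16 {n m : ℕ} {d : Fin n → ℕ} (hd : ∀ i, 0 < d i)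
    (v : Fin m → ∀ i, Fin (d i) → ℂ)
    (horth : ∀ j k, star (productVec (v j)) ⬝ᵥ productVec (v k)
      = if j = k then 1 else 0)
    (hunext : ∀ φ : ∀ i, Fin (d i) → ℂ, productVec φ ≠ 0 →
      ∃ j, star (productVec (v j)) ⬝ᵥ productVec φ ≠ 0)
    (hproper : m < Fintype.card (∀ i, Fin (d i)))
    (P Pperp ρ : Matrix (∀ i, Fin (d i)) (∀ i, Fin (d i)) ℂ)
    (hP : P = ∑ j, outer (productVec (v j)))
    (hPperp : Pperp = 1 - P)
    (hρ : ρ = (Pperp.trace)⁻¹ • Pperp) :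
    ¬ SepN ρ :=
  stmt16_general v horth hunext P Pperp ρ hP hPperp hρ
end
end
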